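/- arXiv:1109.6053 — 2 statements merged into one kernel-verified Lean document; each statement's English description precedes it below -/
import Mathlib

section
/- Let q be a prime power. The group F_{q^3}^× / F_q^×, acting by multiplication on the set of one-dimensional F_q-subspaces of F_{q^3} (viewed as a 3-dimensional F_q-vector space, i.e. the points of the projective plane over F_q), acts simply transitively: for any two one-dimensional subspaces L₁, L₂ there is a unique coset α·F_q^× with α·L₁ = L₂. -/
open Module Submodule

lemma Submodule.exists_ne_zero_eq_span_singleton_of_finrank_eq_one {K V : Type*} [DivisionRing K]
    [AddCommGroup V] [Module K V] {L : Submodule K V} (h : finrank K L = 1) :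
    ∃ x ≠ 0, L = K ∙ x := by
  refine ⟨(Projectivization.mk'' L h).rep, Projectivization.rep_nonzero _, ?_⟩
  rw [← Projectivization.submodule_eq, Projectivization.submodule_mk'']

lemma Submodule.map_mulLeft_span_singleton {K A : Type*} [CommSemiring K] [Semiring A]
    [Algebra K A] (a x : A) : (K ∙ x).map (LinearMap.mulLeft K a) = K ∙ (a * x) := by
  rw [map_span, Set.image_singleton, LinearMap.mulLeft_apply]

lemma QuotientGroup.mk_eq_mk_of_span_singleton_mul_eq {K F : Type*} [Field K] [Field F]
    [Algebra K F] {x : F} (hx : x ≠ 0) {α β : Fˣ} (h : K ∙ (α * x : F) = K ∙ (β * x)) :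
    (α : Fˣ ⧸ (Units.map (algebraMap K F).toMonoidHom).range) = β := by
  obtain ⟨c, hc⟩ := span_singleton_eq_span_singleton.mp h
  have hβ : algebraMap K F c * α = β := by
    apply mul_right_cancel₀ hx
    rw [mul_assoc, ← Algebra.smul_def, ← Units.smul_def, hc]
  refine QuotientGroup.eq.mpr ⟨c, Units.ext ?_⟩
  rw [Units.val_mul, Units.val_inv_eq_inv_val, ← hβ, mul_comm _ (α : F),
    inv_mul_cancel_left₀ α.ne_zero]
  rfl

theorem singer_simply_transitive_general (K F : Type*) [Field K] [Field F] [Algebra K F]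
    (L₁ L₂ : Submodule K F) (h1 : Module.finrank K L₁ = 1)
    (h2 : Module.finrank K L₂ = 1) :
    ∃! γ : Fˣ ⧸ (Units.map (algebraMap K F).toMonoidHom).range,
      ∃ α : Fˣ, QuotientGroup.mk α = γ ∧
        Submodule.map (LinearMap.mulLeft K (α : F)) L₁ = L₂ := by
  obtain ⟨x, hx, rfl⟩ := exists_ne_zero_eq_span_singleton_of_finrank_eq_one h1
  obtain ⟨y, hy, rfl⟩ := exists_ne_zero_eq_span_singleton_of_finrank_eq_one h2
  have hα : y / x * x = y := div_mul_cancel₀ y hx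
  set α := Units.mk0 (y / x) (div_ne_zero hy hx)
  refine ⟨α, ⟨α, rfl, by rw [map_mulLeft_span_singleton, Units.val_mk0, hα]⟩, ?_⟩
  rintro _ ⟨β, rfl, hβ⟩
  rw [map_mulLeft_span_singleton, ← hα] at hβ
  exact QuotientGroup.mk_eq_mk_of_span_singleton_mul_eq hx hβ

/-- The Singer group `Fˣ/Kˣ` acts simply transitively on the points of the
projective plane over `K`, i.e. on the one-dimensional `K`-subspaces of a
cubic extension `F` of `K`. -/
theorem singer_simply_transitive (K F : Type*) [Field K] [Field F] [Fintype K]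
    [Fintype F] [Algebra K F] (h3 : Module.finrank K F = 3)
    (L₁ L₂ : Submodule K F) (h1 : Module.finrank K L₁ = 1)
    (h2 : Module.finrank K L₂ = 1) :
    ∃! γ : Fˣ ⧸ (Units.map (algebraMap K F).toMonoidHom).range,
      ∃ α : Fˣ, QuotientGroup.mk α = γ ∧
        Submodule.map (LinearMap.mulLeft K (α : F)) L₁ = L₂ :=
  singer_simply_transitive_general K F L₁ L₂ h1 h2
end

section
/- In the group G = (ZMod 7) × (ZMod 7), set g₁ = (1,0), g₂ = (0,1), g₃ = −g₁−g₂, and h₁ = (1,2), h₂ = (1,3), h₃ = −h₁−h₂. Then: (a) {g₁, g₂} generates G and {h₁, h₂} generates G; (b) g₁+g₂+g₃ = 0 and h₁+h₂+h₃ = 0; (c) the union of the cyclic subgroups generated by g₁, g₂, g₃ intersects the union of the cyclic subgroups generated by h₁, h₂, h₃ only in 0. (Thus (T₁, T₂) with T₁ = [g₁,g₂,g₃], T₂ = [h₁,h₂,h₃] is an unmixed ramification (Beauville) structure of type ([7,7,7],[7,7,7]) on (ZMod 7)².) -/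
/-!
View `(ZMod 7)²` as the plane over `𝔽₇`: the cyclic subgroups generated by the six elements are
the lines through the origin of slopes `0, ∞, 1` and `2, 3, 6` respectively. Two vectors with
invertible determinant span the plane (Cramer's rule) and their lines meet only in `0`, so
everything reduces to evaluating 2 + 9 determinants in `𝔽₇`.
-/

def Prod.det₂ {R : Type*} [CommRing R] (u v : R × R) : R := u.1 * v.2 - u.2 * v.1

theorem Prod.eq_zero_of_smul_eq_smul_of_isUnit_det₂ {R : Type*} [CommRing R] {u v : R × R}
    (h : IsUnit (u.det₂ v)) {a b : R} (hab : a • u = b • v) : a = 0 := by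
  have h₁ : a * u.1 = b * v.1 := congrArg Prod.fst hab
  have h₂ : a * u.2 = b * v.2 := congrArg Prod.snd hab
  have : a * u.det₂ v = 0 := by
    unfold det₂
    linear_combination v.2 * h₁ - v.1 * h₂
  exact h.mul_left_eq_zero.1 this

namespace ZMod

variable {n : ℕ}

theorem exists_smul_eq_of_mem_zmultiples {M : Type*} [AddCommGroup M] [Module (ZMod n) M]
    {g x : M} (hx : x ∈ AddSubgroup.zmultiples g) : ∃ c : ZMod n, c • g = x := by
  obtain ⟨k, rfl⟩ := hx
  exact ⟨k, Int.cast_smul_eq_zsmul (ZMod n) k g⟩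

theorem closure_pair_eq_top_of_isUnit_det₂ {u v : ZMod n × ZMod n} (h : IsUnit (u.det₂ v)) :
    AddSubgroup.closure {u, v} = ⊤ := by
  obtain ⟨d, hd⟩ := h
  have hd' : (↑d⁻¹ : ZMod n) * (u.1 * v.2 - u.2 * v.1) = 1 := by
    rw [← Prod.det₂, ← hd, Units.inv_mul]
  refine eq_top_iff.2 fun x _ => ?_
  have cramer : x = (↑d⁻¹ * (x.1 * v.2 - x.2 * v.1)) • u + (↑d⁻¹ * (x.2 * u.1 - x.1 * u.2)) • v := by
    ext <;> simp only [Prod.fst_add, Prod.snd_add, Prod.smul_fst, Prod.smul_snd, smul_eq_mul]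
    · linear_combination -x.1 * hd'
    · linear_combination -x.2 * hd'
  rw [cramer]
  exact add_mem (zmod_smul_mem (AddSubgroup.subset_closure (by simp)) _)
    (zmod_smul_mem (AddSubgroup.subset_closure (by simp)) _)

theorem eq_zero_of_mem_zmultiples_of_isUnit_det₂ {u v x : ZMod n × ZMod n}
    (h : IsUnit (u.det₂ v)) (hu : x ∈ AddSubgroup.zmultiples u)
    (hv : x ∈ AddSubgroup.zmultiples v) : x = 0 := by
  obtain ⟨a, rfl⟩ := exists_smul_eq_of_mem_zmultiples (n := n) hu
  obtain ⟨b, hab⟩ := exists_smul_eq_of_mem_zmultiples (n := n) hv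
  rw [Prod.eq_zero_of_smul_eq_smul_of_isUnit_det₂ h hab.symm, zero_smul]

end ZMod

/-- An unmixed ramification (Beauville) structure of type ([7,7,7],[7,7,7]) on
`(ZMod 7)²`: both triples are spherical systems of generators and the unions of
the cyclic subgroups they generate meet only in `0`. -/
theorem beauville_structure_Z7sq :
    let G := ZMod 7 × ZMod 7
    let g₁ : G := (1, 0)
    let g₂ : G := (0, 1)
    let g₃ : G := -g₁ - g₂
    let h₁ : G := (1, 2)
    let h₂ : G := (1, 3)
    let h₃ : G := -h₁ - h₂
    (AddSubgroup.closure {g₁, g₂} = (⊤ : AddSubgroup G)) ∧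
    (AddSubgroup.closure {h₁, h₂} = (⊤ : AddSubgroup G)) ∧
    (g₁ + g₂ + g₃ = 0) ∧ (h₁ + h₂ + h₃ = 0) ∧
    ((AddSubgroup.zmultiples g₁ ∪ AddSubgroup.zmultiples g₂ ∪
        AddSubgroup.zmultiples g₃ : Set G) ∩
      (AddSubgroup.zmultiples h₁ ∪ AddSubgroup.zmultiples h₂ ∪
        AddSubgroup.zmultiples h₃ : Set G) ⊆ {0}) := by
  intro G g₁ g₂ g₃ h₁ h₂ h₃
  refine ⟨ZMod.closure_pair_eq_top_of_isUnit_det₂ (by decide),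
    ZMod.closure_pair_eq_top_of_isUnit_det₂ (by decide),
    by simp only [g₃]; abel, by simp only [h₃]; abel, ?_⟩
  rintro x ⟨(hg | hg) | hg, (hh | hh) | hh⟩ <;>
    exact ZMod.eq_zero_of_mem_zmultiples_of_isUnit_det₂ (by decide) hg hh
end
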